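/- (Freudenthal's Spectral Theorem.) Let R be a Riesz space with a strong unit u that has the principal projection property. Then for every v ∈ R and every real ε > 0 there exist finitely many components χ₁, …, χ_k of u and real numbers λ₁, …, λ_k such that |v − (λ₁•χ₁ + ⋯ + λ_k•χ_k)| ≤ ε•u; consequently every v ∈ R is the uniform limit, in the norm ‖w‖_u = inf{λ ∈ ℝ : λ ≥ 0 and λ•u ≥ |w|}, of a sequence of real linear combinations of components of u. -/

import Mathlib

/-!
For `0 ≤ w ≤ M • u`, let `P r` be the projection onto the band generated by `(w - r • u)⁺`,
the part of the space where `w` exceeds `r • u`; it exists by the principal projection property,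
and it is linear and positive because the splitting `v = a + b` with `a ∈ B`, `b ∈ Bᗮ` is unique.
The projections decrease in `r`, with `P 0 w = w` and `P r w = 0` once `r ≥ M`. On the layer
between levels `s ≤ t` the element `w` is squeezed: `s • (P s u - P t u) ≤ P s w - P t w ≤
t • (P s u - P t u)`, where `P s u - P t u` is a combination of the components `P s u`, `P t u`
of `u`. Summing over the levels `0, ε, …, kε` shows that the step element
`∑ j, jε • (P (jε) u - P ((j+1)ε) u)` lies between `w - ε • u` and `w`. An arbitrary `v` is
shifted into this situation by a multiple of the strong unit.
-/

/-- The absolute value `|v| = (v ⊔ 0) + ((-v) ⊔ 0)` (equal to `v ⊔ -v` in a vector lattice). -/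
def absl {R : Type*} [Lattice R] [AddCommGroup R] (v : R) : R :=
  (v ⊔ 0) + (-v ⊔ 0)

/-- The polar `T^⊥ = {x : |x| ⊓ |t| = 0 for all t ∈ T}`. -/
def polar {R : Type*} [Lattice R] [AddCommGroup R] (T : Set R) : Set R :=
  {x : R | ∀ t ∈ T, absl x ⊓ absl t = 0}

/-- A component of `u`: an element `χ` with `χ ⊓ (u - χ) = 0` and `χ ⊔ (u - χ) = u`. -/
def IsComponent {R : Type*} [Lattice R] [AddCommGroup R] (u χ : R) : Prop :=
  χ ⊓ (u - χ) = 0 ∧ χ ⊔ (u - χ) = u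

/-- An ideal of a Riesz space: an order-convex sublattice subspace. -/
structure IsRieszIdeal {R : Type*} [Lattice R] [AddCommGroup R] [Module ℝ R]
    (I : Set R) : Prop where
  zero_mem : (0 : R) ∈ I
  add_mem : ∀ ⦃a b : R⦄, a ∈ I → b ∈ I → a + b ∈ I
  smul_mem : ∀ (c : ℝ) ⦃a : R⦄, a ∈ I → c • a ∈ I
  sup_mem : ∀ ⦃a b : R⦄, a ∈ I → b ∈ I → a ⊔ b ∈ I
  inf_mem : ∀ ⦃a b : R⦄, a ∈ I → b ∈ I → a ⊓ b ∈ I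
  convex : ∀ ⦃a b c : R⦄, a ∈ I → c ∈ I → a ≤ b → b ≤ c → b ∈ I

/-- A band: an ideal closed under all suprema that exist in `R`. -/
structure IsBand {R : Type*} [Lattice R] [AddCommGroup R] [Module ℝ R]
    (I : Set R) : Prop where
  ideal : IsRieszIdeal I
  sup_closed : ∀ S : Set R, S ⊆ I → ∀ a : R, IsLUB S a → a ∈ I

/-- The principal band generated by `x`: the smallest band containing `x`. -/
def principalBand {R : Type*} [Lattice R] [AddCommGroup R] [Module ℝ R] (x : R) : Set R :=
  ⋂₀ {I : Set R | IsBand I ∧ x ∈ I}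

/-- A projection band: every element of the space splits as a sum of an element
of `B` and an element of `B^⊥`. -/
def IsProjectionBand {R : Type*} [Lattice R] [AddCommGroup R] [Module ℝ R]
    (B : Set R) : Prop :=
  ∀ v : R, ∃ a ∈ B, ∃ b ∈ polar B, v = a + b

theorem inf_eq_zero_of_le {R : Type*} [Lattice R] [Zero R] {a b c : R} (hb : 0 ≤ b) (hba : b ≤ a)
    (hc : 0 ≤ c) (h : a ⊓ c = 0) : b ⊓ c = 0 :=
  le_antisymm (h ▸ inf_le_inf_right c hba) (le_inf hb hc)

section Lattice

variable {R : Type*} [Lattice R] [AddCommGroup R] {u χ : R}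

theorem polar_anti {T T' : Set R} (h : T ⊆ T') : polar T' ⊆ polar T :=
  fun _ hy t ht ↦ hy t (h ht)

theorem IsComponent.nonneg (h : IsComponent u χ) : 0 ≤ χ :=
  h.1 ▸ inf_le_left

end Lattice

section Module

variable {R : Type*} [Lattice R] [AddCommGroup R] [Module ℝ R] {a b x y : R} {B : Set R}

theorem abs_smul_le [PosSMulMono ℝ R] (r : ℝ) (x : R) : |r • x| ≤ |r| • |x| := by
  have key : ∀ s : ℝ, 0 ≤ s → ∀ y : R, |s • y| ≤ s • |y| := fun s hs y ↦
    abs_le'.2 ⟨smul_le_smul_of_nonneg_left (le_abs_self y) hs,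
      by rw [← smul_neg]; exact smul_le_smul_of_nonneg_left (neg_le_abs y) hs⟩
  rcases le_total 0 r with hr | hr
  · simpa [abs_of_nonneg hr] using key r hr x
  · simpa [abs_of_nonpos hr] using key (-r) (neg_nonneg.2 hr) (-x)

theorem IsRieszIdeal.sub_mem (hB : IsRieszIdeal B) (ha : a ∈ B) (hb : b ∈ B) : a - b ∈ B := by
  simpa [sub_eq_add_neg] using hB.add_mem ha (hB.smul_mem (-1) hb)

theorem isBand_principalBand (x : R) : IsBand (principalBand x) where
  ideal :=
    { zero_mem := fun _ hI ↦ hI.1.ideal.zero_mem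
      add_mem := fun _ _ ha hb I hI ↦ hI.1.ideal.add_mem (ha I hI) (hb I hI)
      smul_mem := fun c _ ha I hI ↦ hI.1.ideal.smul_mem c (ha I hI)
      sup_mem := fun _ _ ha hb I hI ↦ hI.1.ideal.sup_mem (ha I hI) (hb I hI)
      inf_mem := fun _ _ ha hb I hI ↦ hI.1.ideal.inf_mem (ha I hI) (hb I hI)
      convex := fun _ _ _ ha hc hab hbc I hI ↦ hI.1.ideal.convex (ha I hI) (hc I hI) hab hbc }
  sup_closed S hS a ha _ hI := hI.1.sup_closed S (fun _ hs ↦ hS hs _ hI) a ha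

theorem mem_principalBand_self (x : R) : x ∈ principalBand x :=
  fun _ hI ↦ hI.2

theorem principalBand_subset {I : Set R} (hI : IsBand I) (hx : x ∈ I) : principalBand x ⊆ I :=
  fun _ hz ↦ hz I ⟨hI, hx⟩

theorem principalBand_mono (hy : 0 ≤ y) (hyx : y ≤ x) : principalBand y ⊆ principalBand x :=
  principalBand_subset (isBand_principalBand x) <| (isBand_principalBand x).ideal.convex
    (isBand_principalBand x).ideal.zero_mem (mem_principalBand_self x) hy hyx

theorem IsProjectionBand.exists_sub_mem_polar (hP : IsProjectionBand B) (v : R) :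
    ∃ a ∈ B, v - a ∈ polar B := by
  obtain ⟨a, ha, b, hb, rfl⟩ := hP v
  exact ⟨a, ha, by rwa [add_sub_cancel_left]⟩

def componentSpan (u : R) : Submodule ℝ R :=
  Submodule.span ℝ {χ | IsComponent u χ}

theorem mem_componentSpan_iff {u s : R} : s ∈ componentSpan u ↔
    ∃ (k : ℕ) (χ : Fin k → R) (lam : Fin k → ℝ),
      (∀ i, IsComponent u (χ i)) ∧ s = ∑ i, lam i • χ i := by
  rw [componentSpan, Submodule.mem_span_set']
  constructor
  · rintro ⟨k, lam, χ, rfl⟩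
    exact ⟨k, fun i ↦ χ i, lam, fun i ↦ (χ i).2, rfl⟩
  · rintro ⟨k, χ, lam, hχ, rfl⟩
    exact ⟨k, lam, fun i ↦ ⟨χ i, hχ i⟩, rfl⟩

end Module

section LatticeOrderedGroup

variable {R : Type*} [Lattice R] [AddCommGroup R] [IsOrderedAddMonoid R]
  {a b c u y χ : R} {T : Set R}

theorem absl_eq_abs (v : R) : absl v = |v| :=
  posPart_add_negPart v

theorem add_inf_le_inf_add_inf (ha : 0 ≤ a) (hb : 0 ≤ b) (hc : 0 ≤ c) :
    (a + b) ⊓ c ≤ a ⊓ c + b ⊓ c := by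
  rw [add_inf]
  refine le_inf ?_ ?_
  · calc (a + b) ⊓ c ≤ (a + b) ⊓ (c + b) := inf_le_inf_left _ (le_add_of_nonneg_right hb)
      _ = a ⊓ c + b := (inf_add a c b).symm
  · exact inf_le_right.trans (le_add_of_nonneg_left (le_inf ha hc))

theorem add_inf_eq_zero (ha : 0 ≤ a) (hb : 0 ≤ b) (hc : 0 ≤ c) (hac : a ⊓ c = 0)
    (hbc : b ⊓ c = 0) : (a + b) ⊓ c = 0 :=
  le_antisymm (by simpa [hac, hbc] using add_inf_le_inf_add_inf ha hb hc)
    (le_inf (add_nonneg ha hb) hc)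

theorem abs_le_abs_add_abs_of_le_of_le (hab : a ≤ b) (hbc : b ≤ c) : |b| ≤ |a| + |c| :=
  abs_le'.2 ⟨hbc.trans ((le_abs_self c).trans (le_add_of_nonneg_left (abs_nonneg a))),
    (neg_le_neg hab).trans ((neg_le_abs a).trans (le_add_of_nonneg_right (abs_nonneg c)))⟩

theorem abs_sup_le_abs_add_abs (a b : R) : |a ⊔ b| ≤ |a| + |b| :=
  abs_le'.2 ⟨sup_le ((le_abs_self a).trans (le_add_of_nonneg_right (abs_nonneg b)))
      ((le_abs_self b).trans (le_add_of_nonneg_left (abs_nonneg a))),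
    neg_sup a b ▸ inf_le_left.trans ((neg_le_abs a).trans (le_add_of_nonneg_right (abs_nonneg b)))⟩

theorem abs_inf_le_abs_add_abs (a b : R) : |a ⊓ b| ≤ |a| + |b| := by
  simpa [← neg_inf] using abs_sup_le_abs_add_abs (-a) (-b)

theorem nonneg_of_abs_inf_abs_eq_zero (h : |a| ⊓ |b| = 0) (hab : 0 ≤ a + b) : 0 ≤ a := by
  have : a⁻ ≤ |a| ⊓ |b| := le_inf (sup_le (neg_le_abs a) (abs_nonneg a))
    (sup_le ((neg_le_iff_add_nonneg'.2 hab).trans (le_abs_self b)) (abs_nonneg b))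
  exact negPart_eq_zero.1 (le_antisymm (h ▸ this) (negPart_nonneg a))

theorem isComponent_add_of_inf_eq_zero (h : a ⊓ b = 0) : IsComponent (a + b) a := by
  refine ⟨by rwa [add_sub_cancel_left], ?_⟩
  rw [add_sub_cancel_left, ← inf_add_sup a b, h, zero_add]

theorem isComponent_self (hu : 0 ≤ u) : IsComponent u u := by
  simpa using isComponent_add_of_inf_eq_zero (inf_eq_right.2 hu)

theorem IsComponent.le (h : IsComponent u χ) : χ ≤ u :=
  sub_nonneg.1 (h.1 ▸ inf_le_right)

theorem mem_polar_iff : y ∈ polar T ↔ ∀ t ∈ T, |y| ⊓ |t| = 0 := by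
  simp only [polar, absl_eq_abs, Set.mem_ofPred_eq]

theorem mem_polar_of_abs_le (ha : a ∈ polar T) (h : |y| ≤ |a|) : y ∈ polar T :=
  mem_polar_iff.2 fun t ht ↦
    inf_eq_zero_of_le (abs_nonneg y) h (abs_nonneg t) (mem_polar_iff.1 ha t ht)

theorem mem_polar_of_abs_le_add (ha : a ∈ polar T) (hb : b ∈ polar T) (h : |y| ≤ |a| + |b|) :
    y ∈ polar T := by
  have habs : |(|a| + |b|)| = |a| + |b| := abs_of_nonneg (add_nonneg (abs_nonneg a) (abs_nonneg b))
  have hab : |a| + |b| ∈ polar T := mem_polar_iff.2 fun t ht ↦ by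
    rw [habs]
    exact add_inf_eq_zero (abs_nonneg a) (abs_nonneg b) (abs_nonneg t)
      (mem_polar_iff.1 ha t ht) (mem_polar_iff.1 hb t ht)
  exact mem_polar_of_abs_le hab (by rwa [habs])

theorem zero_mem_polar : (0 : R) ∈ polar T :=
  mem_polar_iff.2 fun t _ ↦ by rw [abs_zero]; exact inf_eq_left.2 (abs_nonneg t)

theorem add_mem_polar (ha : a ∈ polar T) (hb : b ∈ polar T) : a + b ∈ polar T :=
  mem_polar_of_abs_le_add ha hb (abs_add_le a b)

theorem nsmul_mem_polar (ha : a ∈ polar T) (n : ℕ) : n • a ∈ polar T := by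
  induction n with
  | zero => rw [zero_smul]; exact zero_mem_polar
  | succ n ih => rw [succ_nsmul]; exact add_mem_polar ih ha

theorem eq_zero_of_mem_of_mem_polar (hT : a ∈ T) (hpolar : a ∈ polar T) : a = 0 := by
  have h : |a| = 0 := by simpa using mem_polar_iff.1 hpolar a hT
  exact le_antisymm (h ▸ le_abs_self a) (neg_nonpos.1 (h ▸ neg_le_abs a))

theorem isLUB_mem_polar {S : Set R} (hS : S ⊆ polar T) (ha : IsLUB S a) : a ∈ polar T := by
  refine mem_polar_iff.2 fun t ht ↦ ?_
  -- `a - |a| ⊓ |t|` is still an upper bound of `S`, because each `s ∈ S` is disjoint from `t`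
  have hub : a - |a| ⊓ |t| ∈ upperBounds S := fun s hs ↦ by
    have hsa : 0 ≤ a - s := sub_nonneg.2 (ha.1 hs)
    rw [le_sub_comm]
    calc |a| ⊓ |t| ≤ (|a - s| + |s|) ⊓ |t| :=
          inf_le_inf_right _ (by simpa using abs_add_le (a - s) s)
      _ ≤ |a - s| ⊓ |t| + |s| ⊓ |t| :=
          add_inf_le_inf_add_inf (abs_nonneg _) (abs_nonneg _) (abs_nonneg _)
      _ = |a - s| ⊓ |t| := by rw [mem_polar_iff.1 (hS hs) t ht, add_zero]
      _ ≤ a - s := inf_le_left.trans (abs_of_nonneg hsa).le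
  exact le_antisymm (by simpa using ha.2 hub) (le_inf (abs_nonneg a) (abs_nonneg t))

end LatticeOrderedGroup

section RieszSpace

variable {R : Type*} [Lattice R] [AddCommGroup R] [IsOrderedAddMonoid R] [Module ℝ R]
  [PosSMulMono ℝ R] {a b v x y : R} {B T : Set R}

theorem smul_mem_polar (r : ℝ) (ha : a ∈ polar T) : r • a ∈ polar T := by
  obtain ⟨n, hn⟩ := exists_nat_ge |r|
  refine mem_polar_of_abs_le (nsmul_mem_polar (mem_polar_of_abs_le ha (abs_abs a).le) n) ?_
  rw [abs_of_nonneg (nsmul_nonneg (abs_nonneg a) n), ← Nat.cast_smul_eq_nsmul ℝ]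
  exact (abs_smul_le r a).trans (smul_le_smul_of_nonneg_right hn (abs_nonneg a))

theorem isRieszIdeal_polar (T : Set R) : IsRieszIdeal (polar T) where
  zero_mem := zero_mem_polar
  add_mem _ _ := add_mem_polar
  smul_mem _ _ := smul_mem_polar _
  sup_mem a b ha hb := mem_polar_of_abs_le_add ha hb (abs_sup_le_abs_add_abs a b)
  inf_mem a b ha hb := mem_polar_of_abs_le_add ha hb (abs_inf_le_abs_add_abs a b)
  convex _ _ _ ha hc hab hbc :=
    mem_polar_of_abs_le_add ha hc (abs_le_abs_add_abs_of_le_of_le hab hbc)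

theorem isBand_polar (T : Set R) : IsBand (polar T) :=
  ⟨isRieszIdeal_polar T, fun _ hS _ ha ↦ isLUB_mem_polar hS ha⟩

theorem mem_polar_principalBand (h : |y| ⊓ |x| = 0) : y ∈ polar (principalBand x) := by
  have hx : principalBand x ⊆ polar {y} :=
    principalBand_subset (isBand_polar {y}) (mem_polar_iff.2 fun t ht ↦ by rw [ht, inf_comm, h])
  exact mem_polar_iff.2 fun t ht ↦ by rw [inf_comm]; exact mem_polar_iff.1 (hx ht) y rfl

theorem IsRieszIdeal.eq_of_sub_mem_polar (hB : IsRieszIdeal B) {a a' : R} (ha : a ∈ B)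
    (ha' : a' ∈ B) (h : v - a ∈ polar B) (h' : v - a' ∈ polar B) : a = a' := by
  have hpolar : a - a' ∈ polar B := by
    simpa using (isRieszIdeal_polar B).sub_mem h' h
  exact sub_eq_zero.1 (eq_zero_of_mem_of_mem_polar (hB.sub_mem ha ha') hpolar)

namespace IsProjectionBand

variable (hP : IsProjectionBand B) (hB : IsRieszIdeal B)

noncomputable def proj : R →ₗ[ℝ] R where
  toFun v := (hP.exists_sub_mem_polar v).choose
  map_add' v w := by
    obtain ⟨hv, hv'⟩ := (hP.exists_sub_mem_polar v).choose_spec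
    obtain ⟨hw, hw'⟩ := (hP.exists_sub_mem_polar w).choose_spec
    obtain ⟨hvw, hvw'⟩ := (hP.exists_sub_mem_polar (v + w)).choose_spec
    refine hB.eq_of_sub_mem_polar hvw (hB.add_mem hv hw) hvw' ?_
    convert add_mem_polar hv' hw' using 1
    abel
  map_smul' c v := by
    obtain ⟨hv, hv'⟩ := (hP.exists_sub_mem_polar v).choose_spec
    obtain ⟨hcv, hcv'⟩ := (hP.exists_sub_mem_polar (c • v)).choose_spec
    refine hB.eq_of_sub_mem_polar hcv (hB.smul_mem c hv) hcv' ?_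
    rw [RingHom.id_apply, ← smul_sub]
    exact smul_mem_polar c hv'

theorem proj_mem (v : R) : hP.proj hB v ∈ B :=
  (hP.exists_sub_mem_polar v).choose_spec.1

theorem sub_proj_mem_polar (v : R) : v - hP.proj hB v ∈ polar B :=
  (hP.exists_sub_mem_polar v).choose_spec.2

theorem proj_eq (ha : a ∈ B) (h : v - a ∈ polar B) : hP.proj hB v = a :=
  hB.eq_of_sub_mem_polar (hP.proj_mem hB v) ha (hP.sub_proj_mem_polar hB v) h

theorem proj_apply_of_mem (hv : v ∈ B) : hP.proj hB v = v :=
  hP.proj_eq hB hv (by rw [sub_self]; exact zero_mem_polar)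

theorem proj_apply_of_mem_polar (hv : v ∈ polar B) : hP.proj hB v = 0 :=
  hP.proj_eq hB hB.zero_mem (by rwa [sub_zero])

theorem abs_proj_inf_abs_sub_proj (v : R) : |hP.proj hB v| ⊓ |v - hP.proj hB v| = 0 := by
  rw [inf_comm]
  exact mem_polar_iff.1 (hP.sub_proj_mem_polar hB v) _ (hP.proj_mem hB v)

theorem proj_nonneg (hv : 0 ≤ v) : 0 ≤ hP.proj hB v :=
  nonneg_of_abs_inf_abs_eq_zero (hP.abs_proj_inf_abs_sub_proj hB v) (by rwa [add_sub_cancel])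

theorem proj_le_self (hv : 0 ≤ v) : hP.proj hB v ≤ v := by
  refine sub_nonneg.1 (nonneg_of_abs_inf_abs_eq_zero ?_ (by rwa [sub_add_cancel]))
  rw [inf_comm]
  exact hP.abs_proj_inf_abs_sub_proj hB v

theorem proj_mono : Monotone (hP.proj hB) := fun v w h ↦ by
  simpa using hP.proj_nonneg hB (sub_nonneg.2 h)

theorem isComponent_proj {u : R} (hu : 0 ≤ u) : IsComponent u (hP.proj hB u) := by
  have h := hP.abs_proj_inf_abs_sub_proj hB u
  rw [abs_of_nonneg (hP.proj_nonneg hB hu),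
    abs_of_nonneg (sub_nonneg.2 (hP.proj_le_self hB hu))] at h
  simpa using isComponent_add_of_inf_eq_zero h

theorem proj_proj_of_subset {C : Set R} (hQ : IsProjectionBand C) (hC : IsRieszIdeal C)
    (hCB : C ⊆ B) (v : R) : hQ.proj hC (hP.proj hB v) = hQ.proj hC v := by
  have h := hQ.proj_apply_of_mem_polar hC (polar_anti hCB (hP.sub_proj_mem_polar hB v))
  rwa [map_sub, sub_eq_zero, eq_comm] at h

end IsProjectionBand

end RieszSpace

section SpectralSystem

variable {R : Type*} [Lattice R] [AddCommGroup R] [IsOrderedAddMonoid R] [Module ℝ R]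
  [PosSMulMono ℝ R] (hpp : ∀ x : R, IsProjectionBand (principalBand x)) {u w x y : R}

noncomputable def principalBandProj (x : R) : R →ₗ[ℝ] R :=
  (hpp x).proj (isBand_principalBand x).ideal

theorem principalBandProj_posPart (z : R) : principalBandProj hpp z⁺ z = z⁺ := by
  refine (hpp _).proj_eq _ (mem_principalBand_self _) (mem_polar_principalBand ?_)
  have : z - z⁺ = -z⁻ := by nth_rewrite 1 [← posPart_sub_negPart z]; abel
  rw [this, abs_neg, abs_of_nonneg (negPart_nonneg z), abs_of_nonneg (posPart_nonneg z),
    inf_comm, posPart_inf_negPart_eq_zero]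

theorem principalBandProj_zero_apply (v : R) : principalBandProj hpp 0 v = 0 :=
  (hpp 0).proj_apply_of_mem_polar _ (mem_polar_principalBand (by simp))

theorem principalBandProj_comp_of_le (hy : 0 ≤ y) (hyx : y ≤ x) (v : R) :
    principalBandProj hpp y (principalBandProj hpp x v) = principalBandProj hpp y v :=
  (hpp x).proj_proj_of_subset _ (hpp y) _ (principalBand_mono hy hyx) v

/-- `r ↦ levelProj hpp u w r` is the spectral system of `w` relative to `u`: the projection onto
the band where `w` exceeds `r • u`. -/
noncomputable def levelProj (u w : R) (r : ℝ) : R →ₗ[ℝ] R :=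
  principalBandProj hpp (w - r • u)⁺

theorem posPart_sub_smul_antitone (hu : 0 ≤ u) (w : R) : Antitone fun r : ℝ ↦ (w - r • u)⁺ :=
  fun _ _ hst ↦ posPart_mono (sub_le_sub_left (smul_le_smul_of_nonneg_right hst hu) w)

theorem levelProj_sub_smul (r : ℝ) : levelProj hpp u w r (w - r • u) = (w - r • u)⁺ :=
  principalBandProj_posPart hpp _

theorem levelProj_comp_of_le (hu : 0 ≤ u) {s t : ℝ} (hst : s ≤ t) (v : R) :
    levelProj hpp u w t (levelProj hpp u w s v) = levelProj hpp u w t v :=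
  principalBandProj_comp_of_le hpp (posPart_nonneg _) (posPart_sub_smul_antitone hu w hst) v

theorem isComponent_levelProj (hu : 0 ≤ u) (r : ℝ) : IsComponent u (levelProj hpp u w r u) :=
  (hpp _).isComponent_proj (isBand_principalBand _).ideal hu

theorem smul_sub_le_levelProj_sub (hu : 0 ≤ u) {s t : ℝ} (hst : s ≤ t) :
    s • (levelProj hpp u w s u - levelProj hpp u w t u) ≤
      levelProj hpp u w s w - levelProj hpp u w t w := by
  set P := levelProj hpp u w
  have h : P t (w - s • u) ≤ P s (w - s • u) := by
    rw [← levelProj_comp_of_le hpp hu hst, levelProj_sub_smul]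
    exact (hpp _).proj_le_self (isBand_principalBand _).ideal (posPart_nonneg _)
  rw [map_sub, map_sub, map_smul, map_smul] at h
  calc s • (P s u - P t u) = (P s w - P t w) - ((P s w - s • P s u) - (P t w - s • P t u)) := by
        rw [smul_sub]; abel
    _ ≤ P s w - P t w := sub_le_self _ (sub_nonneg.2 h)

theorem levelProj_sub_le_smul_sub (hu : 0 ≤ u) {s t : ℝ} (hst : s ≤ t) :
    levelProj hpp u w s w - levelProj hpp u w t w ≤
      t • (levelProj hpp u w s u - levelProj hpp u w t u) := by
  set P := levelProj hpp u w
  have hB := (isBand_principalBand (w - s • u)⁺).ideal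
  have h : P s (w - t • u) ≤ P t (w - t • u) := by
    calc P s (w - t • u) ≤ P s (w - t • u)⁺ := (hpp _).proj_mono hB (le_posPart _)
      _ = (w - t • u)⁺ := (hpp _).proj_apply_of_mem hB <| principalBand_mono (posPart_nonneg _)
          (posPart_sub_smul_antitone hu w hst) (mem_principalBand_self _)
      _ = P t (w - t • u) := (levelProj_sub_smul hpp t).symm
  rw [map_sub, map_sub, map_smul, map_smul] at h
  calc P s w - P t w = t • (P s u - P t u) + ((P s w - t • P s u) - (P t w - t • P t u)) := by
        rw [smul_sub]; abel
    _ ≤ t • (P s u - P t u) := add_le_of_nonpos_right (sub_nonpos.2 h)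

end SpectralSystem

section Approximation

variable {R : Type*} [Lattice R] [AddCommGroup R] [IsOrderedAddMonoid R] [Module ℝ R]
  [PosSMulMono ℝ R] {u v w : R}

theorem exists_mem_componentSpan_sub_le (hpp : ∀ x : R, IsProjectionBand (principalBand x))
    (hu : 0 ≤ u) (hw : 0 ≤ w) {M : ℝ} (hwM : w ≤ M • u) {ε : ℝ} (hε : 0 < ε) :
    ∃ s ∈ componentSpan u, 0 ≤ w - s ∧ w - s ≤ ε • u := by
  obtain ⟨k, hk⟩ := exists_nat_ge (M / ε)
  set P : ℕ → R →ₗ[ℝ] R := fun j ↦ levelProj hpp u w (j * ε)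
  have hcomp : ∀ j, IsComponent u (P j u) := fun j ↦ isComponent_levelProj hpp hu _
  have hP0 : P 0 w = w := by
    simpa [P, posPart_eq_self.2 hw] using levelProj_sub_smul hpp (u := u) (w := w) 0
  have hPk : P k w = 0 := by
    have : (w - ((k : ℝ) * ε) • u)⁺ = 0 := posPart_eq_zero.2 <| sub_nonpos.2 <|
      hwM.trans (smul_le_smul_of_nonneg_right ((div_le_iff₀ hε).1 hk) hu)
    simp only [P, levelProj, this, principalBandProj_zero_apply]
  have hlayer : ∀ j : ℕ, 0 ≤ (P j w - P (j + 1) w) - (j * ε) • (P j u - P (j + 1) u) ∧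
      (P j w - P (j + 1) w) - (j * ε) • (P j u - P (j + 1) u) ≤ ε • (P j u - P (j + 1) u) := by
    intro j
    have hj : (j : ℝ) * ε ≤ ((j + 1 : ℕ) : ℝ) * ε := by gcongr; simp
    have hstep : ((j + 1 : ℕ) : ℝ) * ε = j * ε + ε := by push_cast; ring
    refine ⟨sub_nonneg.2 (smul_sub_le_levelProj_sub hpp hu hj), ?_⟩
    rw [sub_le_iff_le_add', ← add_smul, ← hstep]
    exact levelProj_sub_le_smul_sub hpp hu hj
  refine ⟨∑ j ∈ Finset.range k, (j * ε) • (P j u - P (j + 1) u), ?_, ?_⟩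
  · exact Submodule.sum_mem _ fun j _ ↦ Submodule.smul_mem _ _ <| Submodule.sub_mem _
      (Submodule.subset_span (hcomp j)) (Submodule.subset_span (hcomp (j + 1)))
  have hsum : w - ∑ j ∈ Finset.range k, (j * ε) • (P j u - P (j + 1) u) =
      ∑ j ∈ Finset.range k, ((P j w - P (j + 1) w) - (j * ε) • (P j u - P (j + 1) u)) := by
    rw [Finset.sum_sub_distrib, Finset.sum_range_sub', hP0, hPk, sub_zero]
  rw [hsum]
  refine ⟨Finset.sum_nonneg fun j _ ↦ (hlayer j).1, ?_⟩
  calc _ ≤ ∑ j ∈ Finset.range k, ε • (P j u - P (j + 1) u) :=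
        Finset.sum_le_sum fun j _ ↦ (hlayer j).2
    _ = ε • (P 0 u - P k u) := by rw [← Finset.smul_sum, Finset.sum_range_sub']
    _ ≤ ε • u :=
        smul_le_smul_of_nonneg_left ((sub_le_self _ (hcomp k).nonneg).trans (hcomp 0).le) hε.le

theorem exists_mem_componentSpan_abs_sub_le (hpp : ∀ x : R, IsProjectionBand (principalBand x))
    (hu : 0 ≤ u) {M : ℝ} (hv : |v| ≤ M • u) {ε : ℝ} (hε : 0 < ε) :
    ∃ s ∈ componentSpan u, |v - s| ≤ ε • u := by
  have hw : 0 ≤ v + M • u := neg_le_iff_add_nonneg'.1 ((neg_le_abs v).trans hv)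
  have hwM : v + M • u ≤ (M + M) • u := by
    rw [add_smul]; exact add_le_add_left ((le_abs_self v).trans hv) _
  obtain ⟨s, hs, hws, hwsε⟩ := exists_mem_componentSpan_sub_le hpp hu hw hwM hε
  refine ⟨s - M • u, Submodule.sub_mem _ hs
    (Submodule.smul_mem _ _ (Submodule.subset_span (isComponent_self hu))), ?_⟩
  have : v - (s - M • u) = v + M • u - s := by abel
  rwa [this, abs_of_nonneg hws]

end Approximation

/-- **Freudenthal's Spectral Theorem.** In a Riesz space with strong unit `u` and the
principal projection property, every element is approximated, uniformly in the
`u`-norm, by real linear combinations of components of `u`. -/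
theorem statement2 {R : Type*} [Lattice R] [AddCommGroup R] [Module ℝ R]
    [CovariantClass R R (· + ·) (· ≤ ·)] [PosSMulMono ℝ R]
    (u : R) (hu0 : 0 ≤ u) (hu : ∀ v : R, ∃ n : ℕ, 1 ≤ n ∧ v ≤ n • u)
    (hpp : ∀ x : R, IsProjectionBand (principalBand x)) (v : R) :
    (∀ ε : ℝ, 0 < ε → ∃ (k : ℕ) (χ : Fin k → R) (lam : Fin k → ℝ),
        (∀ i, IsComponent u (χ i)) ∧ absl (v - ∑ i, lam i • χ i) ≤ ε • u) ∧
    (∃ c : ℕ → R,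
        (∀ n, ∃ (k : ℕ) (χ : Fin k → R) (lam : Fin k → ℝ),
          (∀ i, IsComponent u (χ i)) ∧ c n = ∑ i, lam i • χ i) ∧
        ∀ ε : ℝ, 0 < ε → ∃ N : ℕ, ∀ n ≥ N, absl (v - c n) ≤ ε • u) := by
  have : IsOrderedAddMonoid R := { add_le_add_left := fun _ _ h c ↦ add_le_add_left h c }
  have approx : ∀ ε : ℝ, 0 < ε → ∃ s ∈ componentSpan u, absl (v - s) ≤ ε • u := by
    obtain ⟨n, -, hn⟩ := hu |v|
    intro ε hε
    simpa only [absl_eq_abs] using exists_mem_componentSpan_abs_sub_le hpp hu0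
      (M := n) (by rwa [Nat.cast_smul_eq_nsmul]) hε
  refine ⟨fun ε hε ↦ ?_, ?_⟩
  · obtain ⟨s, hs, hvs⟩ := approx ε hε
    obtain ⟨k, χ, lam, hχ, rfl⟩ := mem_componentSpan_iff.1 hs
    exact ⟨k, χ, lam, hχ, hvs⟩
  · choose c hc hvc using fun n : ℕ ↦ approx (1 / (n + 1)) Nat.one_div_pos_of_nat
    refine ⟨c, fun n ↦ mem_componentSpan_iff.1 (hc n), fun ε hε ↦ ?_⟩
    obtain ⟨N, hN⟩ := exists_nat_one_div_lt hε
    refine ⟨N, fun n hn ↦ (hvc n).trans (smul_le_smul_of_nonneg_right ?_ hu0)⟩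
    calc 1 / ((n : ℝ) + 1) ≤ 1 / ((N : ℝ) + 1) := Nat.one_div_le_one_div hn
      _ ≤ ε := hN.le
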